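/- arXiv:1802.06546 — 2 statements merged into one kernel-verified Lean document; each statement's English description precedes it below -/
import Mathlib

section
/- Let m1, m2 be positive integers with gcd(m1,m2)=1 and m2 odd, and α ∈ ℝ. For t ∈ [0,2π) define A(t) = {s ∈ [0,2π) : ℓ(s) = ℓ(t)}. Then #A(t) = m2 if t = lπ/(m1 m2) with l ≡ 0 (mod m1), 0 ≤ l < 2 m1 m2; #A(t) = 2 if t = (l+1/2)π/(m1 m2) for some 0 ≤ l < 2 m1 m2; and #A(t) = 1 for all other t ∈ [0,2π). -/
open Real

noncomputable def lissajous (m1 m2 : ℕ) (α : ℝ) (t : ℝ) : ℝ × ℝ × ℝ :=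
  (Real.sin (m2 * t) * Real.cos (m1 * t - α * π),
   Real.sin (m2 * t) * Real.sin (m1 * t - α * π),
   Real.cos (m2 * t))

/-!
In spherical coordinates ℓ(t) has polar angle m₂t and azimuth m₁t − απ, both read in ℝ/2πℤ.
Two points of the sphere with polar angles φ, φ' and azimuths θ, θ' coincide iff φ = φ' when
φ' is a pole, and otherwise iff (φ, θ) = (φ', θ') or (φ, θ) = (−φ', θ' + π). At a pole the
parameters s with m₂s ≡ m₂t form a coset of the m₂-torsion of the circle, so there are m₂ of
them. Away from the poles, m₁ and m₂ being coprime, each of the two systems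
(m₂s, m₁s) ≡ (m₂t, m₁t) and (m₂s, m₁s) ≡ (−m₂t, m₁t + π) has at most one solution: the first
one is s = t, and by Bézout the second is solvable exactly when m₁(−m₂t) ≡ m₂(m₁t + π), i.e.
(as m₂ is odd) when 2m₁m₂t ≡ π, which means t = (l + 1/2)π/(m₁m₂).
-/

section Coprime

variable {G : Type*} [AddCommGroup G] {m n : ℕ}

theorem Nat.Coprime.eq_of_nsmul_eq_of_nsmul_eq (h : m.Coprime n) {x y : G}
    (hm : m • x = m • y) (hn : n • x = n • y) : x = y := by
  obtain ⟨u, v, huv⟩ := Nat.isCoprime_iff_coprime.2 h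
  rw [← sub_eq_zero]
  calc x - y = (u * m + v * n) • (x - y) := by rw [huv, one_zsmul]
    _ = u • m • (x - y) + v • n • (x - y) := by
      rw [add_zsmul, mul_zsmul, mul_zsmul, natCast_zsmul, natCast_zsmul]
    _ = 0 := by
      rw [nsmul_sub, nsmul_sub, sub_eq_zero.2 hm, sub_eq_zero.2 hn, zsmul_zero, zsmul_zero,
        add_zero]

theorem Nat.Coprime.exists_nsmul_eq_and_nsmul_eq (h : m.Coprime n) {a b : G}
    (hab : n • a = m • b) : ∃ x : G, m • x = a ∧ n • x = b := by
  obtain ⟨u, v, huv⟩ := Nat.isCoprime_iff_coprime.2 h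
  refine ⟨u • a + v • b, ?_, ?_⟩
  · calc m • (u • a + v • b) = (u * m + v * n) • a := by
          rw [smul_add, smul_comm m u, smul_comm m v, ← hab, add_zsmul, mul_zsmul, mul_zsmul,
            natCast_zsmul, natCast_zsmul]
      _ = a := by rw [huv, one_zsmul]
  · calc n • (u • a + v • b) = (u * m + v * n) • b := by
          rw [smul_add, smul_comm n u, smul_comm n v, hab, add_zsmul, mul_zsmul, mul_zsmul,
            natCast_zsmul, natCast_zsmul]
      _ = b := by rw [huv, one_zsmul]

end Coprime

namespace AddCircle

section

variable {𝕜 : Type*} [AddCommGroup 𝕜] [LinearOrder 𝕜] [IsOrderedAddMonoid 𝕜] [Archimedean 𝕜]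
  {p : 𝕜} [Fact (0 < p)]

theorem ncard_sep_Ico (a : 𝕜) (P : AddCircle p → Prop) :
    {x ∈ Set.Ico a (a + p) | P x}.ncard = {u | P u}.ncard := by
  rw [← Set.InjOn.ncard_image (f := ((↑) : 𝕜 → AddCircle p))]
  · congr
    ext u
    constructor
    · rintro ⟨x, ⟨-, hx⟩, rfl⟩
      exact hx
    · intro hu
      exact ⟨equivIco p a u, ⟨(equivIco p a u).2, by rwa [coe_equivIco]⟩, coe_equivIco⟩
  · intro x hx y hy h
    exact (coe_eq_coe_iff_of_mem_Ico hx.1 hy.1).1 h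

end

section

variable {𝕜 : Type*} [Field 𝕜] [LinearOrder 𝕜] [IsStrictOrderedRing 𝕜] [Archimedean 𝕜]
  {p : 𝕜} [hp : Fact (0 < p)]

theorem ncard_setOf_nsmul_eq_zero {n : ℕ} (hn : 0 < n) :
    {u : AddCircle p | n • u = 0}.ncard = n := by
  have hn' : (0 : 𝕜) < n := by exact_mod_cast hn
  have hmem : ∀ m ∈ Set.Iio n, (m / n * p : 𝕜) ∈ Set.Ico 0 (0 + p) := fun m hm => by
    rw [zero_add]
    refine ⟨mul_nonneg (by positivity) hp.out.le, mul_lt_of_lt_one_left hp.out ?_⟩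
    rw [div_lt_one hn']
    exact_mod_cast hm
  have himage : {u : AddCircle p | n • u = 0} =
      (fun m : ℕ => ((m / n * p : 𝕜) : AddCircle p)) '' Set.Iio n := by
    ext u
    simp [AddCircle.nsmul_eq_zero_iff hn]
  rw [himage, Set.InjOn.ncard_image, Set.ncard_Iio_nat]
  intro m hm m' hm' h
  have := (coe_eq_coe_iff_of_mem_Ico (hmem m hm) (hmem m' hm')).1 h
  rw [mul_left_inj' hp.out.ne', div_left_inj' hn'.ne'] at this
  exact_mod_cast this

end

end AddCircle

theorem ncard_setOf_nsmul_eq_nsmul {G : Type*} [AddCommGroup G] (n : ℕ) (v : G) :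
    {u : G | n • u = n • v}.ncard = {u : G | n • u = 0}.ncard := by
  have : {u : G | n • u = n • v} = (· + v) '' {u : G | n • u = 0} := by
    ext u
    simp [Set.image_add_right, ← sub_eq_add_neg, nsmul_sub, sub_eq_zero]
  rw [this, Set.ncard_image_of_injective _ (add_left_injective v)]

namespace Real.Angle

theorem eq_of_cos_eq_of_sin_eq {θ ψ : Angle} (hcos : cos θ = cos ψ) (hsin : sin θ = sin ψ) :
    θ = ψ := by
  induction θ using Real.Angle.induction_on
  induction ψ using Real.Angle.induction_on
  exact cos_sin_inj (by simpa using hcos) (by simpa using hsin)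

theorem odd_nsmul_coe_pi {n : ℕ} (hn : Odd n) : n • (π : Angle) = π := by
  obtain ⟨k, rfl⟩ := hn
  rw [add_nsmul, mul_nsmul, two_nsmul_coe_pi, nsmul_zero, one_nsmul, zero_add]

theorem ncard_sep_Ico (P : Angle → Prop) :
    {x ∈ Set.Ico 0 (2 * π) | P x}.ncard = {θ : Angle | P θ}.ncard := by
  have : Fact (0 < 2 * π) := ⟨by positivity⟩
  have h := AddCircle.ncard_sep_Ico (p := 2 * π) 0 P
  rw [zero_add] at h
  exact h

theorem ncard_setOf_nsmul_eq_zero {n : ℕ} (hn : 0 < n) : {θ : Angle | n • θ = 0}.ncard = n := by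
  have : Fact (0 < 2 * π) := ⟨by positivity⟩
  exact AddCircle.ncard_setOf_nsmul_eq_zero hn

theorem exists_nsmul_eq_neg_nsmul_and_nsmul_eq_nsmul_add_pi_iff {m1 m2 : ℕ}
    (hcop : m1.Coprime m2) (hodd : Odd m2) (ψ : Angle) :
    (∃ σ : Angle, m2 • σ = -(m2 • ψ) ∧ m1 • σ = m1 • ψ + π) ↔ (2 * m1 * m2) • ψ = π := by
  have key : m1 • -(m2 • ψ) = m2 • (m1 • ψ + π) ↔ (2 * m1 * m2) • ψ = π := by
    rw [smul_neg, smul_add, odd_nsmul_coe_pi hodd, smul_comm m2 m1, neg_eq_iff_add_eq_zero,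
      ← add_assoc, ← eq_neg_iff_add_eq_zero, neg_coe_pi, ← two_nsmul, ← mul_nsmul, ← mul_nsmul',
      mul_comm m1 2]
  rw [← key]
  constructor
  · rintro ⟨σ, h2, h1⟩
    rw [← h2, ← h1, smul_comm]
  · exact Nat.Coprime.exists_nsmul_eq_and_nsmul_eq hcop.symm

end Real.Angle

open Real.Angle

noncomputable def sphericalPoint (φ θ : Angle) : ℝ × ℝ × ℝ :=
  (sin φ * cos θ, sin φ * sin θ, cos φ)

section

variable {φ θ φ' θ' : Angle}

theorem sphericalPoint_eq_iff_of_sin_eq_zero (h : sin φ' = 0) :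
    sphericalPoint φ θ = sphericalPoint φ' θ' ↔ φ = φ' := by
  simp only [sphericalPoint, Prod.ext_iff, h, zero_mul]
  refine ⟨fun ⟨h1, h2, h3⟩ => eq_of_cos_eq_of_sin_eq h3 ?_, fun h' => ?_⟩
  · rw [h]
    linear_combination cos θ * h1 + sin θ * h2 - sin φ * Real.Angle.cos_sq_add_sin_sq θ
  · simp [h', h]

theorem sphericalPoint_eq_iff_of_sin_ne_zero (h : sin φ' ≠ 0) :
    sphericalPoint φ θ = sphericalPoint φ' θ' ↔ (φ = φ' ∧ θ = θ') ∨ (φ = -φ' ∧ θ = θ' + π) := by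
  simp only [sphericalPoint, Prod.ext_iff]
  constructor
  · rintro ⟨h1, h2, h3⟩
    rcases cos_eq_iff_eq_or_eq_neg.1 h3 with rfl | rfl
    · exact Or.inl ⟨rfl, eq_of_cos_eq_of_sin_eq (mul_left_cancel₀ h h1) (mul_left_cancel₀ h h2)⟩
    · rw [Angle.sin_neg] at h1 h2
      refine Or.inr ⟨rfl, eq_of_cos_eq_of_sin_eq ?_ ?_⟩
      · rw [Angle.cos_add_pi]; exact mul_left_cancel₀ h (by linear_combination -h1)
      · rw [Angle.sin_add_pi]; exact mul_left_cancel₀ h (by linear_combination -h2)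
  · rintro (⟨rfl, rfl⟩ | ⟨rfl, rfl⟩)
    · exact ⟨rfl, rfl, rfl⟩
    · simp [Angle.sin_neg, Angle.cos_neg, Angle.cos_add_pi, Angle.sin_add_pi]

end

theorem lissajous_eq_sphericalPoint (m1 m2 : ℕ) (α t : ℝ) :
    lissajous m1 m2 α t = sphericalPoint (m2 • (t : Angle)) (m1 • (t : Angle) - ↑(α * π)) := by
  simp [lissajous, sphericalPoint, ← natCast_mul_eq_nsmul, ← Angle.coe_sub]

theorem sin_natCast_mul_eq_sin_nsmul (n : ℕ) (t : ℝ) :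
    Real.sin (n * t) = Angle.sin (n • (t : Angle)) := by
  rw [← natCast_mul_eq_nsmul, Angle.sin_coe]

section

variable {m1 m2 : ℕ} {α s t : ℝ}

theorem lissajous_eq_iff_of_sin_eq_zero (h : Real.sin (m2 * t) = 0) :
    lissajous m1 m2 α s = lissajous m1 m2 α t ↔ m2 • (s : Angle) = m2 • (t : Angle) := by
  rw [sin_natCast_mul_eq_sin_nsmul] at h
  rw [lissajous_eq_sphericalPoint, lissajous_eq_sphericalPoint,
    sphericalPoint_eq_iff_of_sin_eq_zero h]

theorem lissajous_eq_iff_of_sin_ne_zero (hcop : m1.Coprime m2) (h : Real.sin (m2 * t) ≠ 0) :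
    lissajous m1 m2 α s = lissajous m1 m2 α t ↔
      (s : Angle) = t ∨ (m2 • (s : Angle) = -(m2 • (t : Angle)) ∧
        m1 • (s : Angle) = m1 • (t : Angle) + π) := by
  rw [sin_natCast_mul_eq_sin_nsmul] at h
  rw [lissajous_eq_sphericalPoint, lissajous_eq_sphericalPoint,
    sphericalPoint_eq_iff_of_sin_ne_zero h, sub_left_inj, sub_add_eq_add_sub, sub_left_inj]
  exact or_congr ⟨fun ⟨h2, h1⟩ => hcop.eq_of_nsmul_eq_of_nsmul_eq h1 h2, fun h' => h' ▸ ⟨rfl, rfl⟩⟩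
    Iff.rfl

theorem ncard_lissajous_fiber_of_sin_eq_zero (hm2 : 0 < m2) (h : Real.sin (m2 * t) = 0) :
    {s ∈ Set.Ico 0 (2 * π) | lissajous m1 m2 α s = lissajous m1 m2 α t}.ncard = m2 := by
  simp_rw [lissajous_eq_iff_of_sin_eq_zero h]
  rw [Angle.ncard_sep_Ico (fun σ => m2 • σ = m2 • (t : Angle)), ncard_setOf_nsmul_eq_nsmul,
    Angle.ncard_setOf_nsmul_eq_zero hm2]

open Classical in
theorem ncard_lissajous_fiber_of_sin_ne_zero (hcop : m1.Coprime m2) (hodd : Odd m2)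
    (h : Real.sin (m2 * t) ≠ 0) :
    {s ∈ Set.Ico 0 (2 * π) | lissajous m1 m2 α s = lissajous m1 m2 α t}.ncard =
      if (2 * m1 * m2) • (t : Angle) = π then 2 else 1 := by
  simp_rw [lissajous_eq_iff_of_sin_ne_zero hcop h]
  rw [Angle.ncard_sep_Ico
    (fun σ => σ = t ∨ (m2 • σ = -(m2 • (t : Angle)) ∧ m1 • σ = m1 • (t : Angle) + π))]
  set T := {σ : Angle | m2 • σ = -(m2 • (t : Angle)) ∧ m1 • σ = m1 • (t : Angle) + π}
  have hT : T.Subsingleton := fun x hx y hy =>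
    hcop.eq_of_nsmul_eq_of_nsmul_eq (hx.2.trans hy.2.symm) (hx.1.trans hy.1.symm)
  have htT : (t : Angle) ∉ T := fun ht => Angle.pi_ne_zero (by simpa using ht.2)
  have hex := Angle.exists_nsmul_eq_neg_nsmul_and_nsmul_eq_nsmul_add_pi_iff hcop hodd (t : Angle)
  change (insert (t : Angle) T).ncard = _
  split_ifs with hπ
  · obtain ⟨σ, hσ⟩ := hex.2 hπ
    rw [hT.eq_singleton_of_mem hσ, Set.ncard_pair (ne_of_mem_of_not_mem hσ htT).symm]
  · have : T = ∅ := Set.eq_empty_of_forall_notMem fun σ hσ => hπ (hex.1 ⟨σ, hσ⟩)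
    rw [this, insert_empty_eq, Set.ncard_singleton]

theorem sin_natCast_mul_eq_zero_iff (hm1 : 0 < m1) (hm2 : 0 < m2) (ht : t ∈ Set.Ico 0 (2 * π)) :
    Real.sin (m2 * t) = 0 ↔ ∃ l : ℕ, l < 2 * m1 * m2 ∧ m1 ∣ l ∧ t = l * π / (m1 * m2) := by
  have hm1' : (0 : ℝ) < m1 := by exact_mod_cast hm1
  have hm2' : (0 : ℝ) < m2 := by exact_mod_cast hm2
  constructor
  · intro h
    obtain ⟨n, hn⟩ := Real.sin_eq_zero_iff.1 h
    have hn0 : 0 ≤ n := by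
      have : (0 : ℝ) ≤ n := by nlinarith [ht.1, pi_pos]
      exact_mod_cast this
    lift n to ℕ using hn0
    push_cast at hn
    have hn2 : n < 2 * m2 := by
      have : (n : ℝ) < 2 * m2 := by nlinarith [mul_lt_mul_of_pos_left ht.2 hm2', pi_pos]
      exact_mod_cast this
    refine ⟨m1 * n, ?_, dvd_mul_right m1 n, ?_⟩
    · calc m1 * n < m1 * (2 * m2) := Nat.mul_lt_mul_of_pos_left hn2 hm1
        _ = 2 * m1 * m2 := by ring
    · push_cast
      field_simp
      linarith
  · rintro ⟨l, -, ⟨q, rfl⟩, rfl⟩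
    have : (m2 : ℝ) * ((m1 * q : ℕ) * π / (m1 * m2)) = q * π := by push_cast; field_simp
    rw [this]
    exact Real.sin_nat_mul_pi q

theorem two_mul_mul_nsmul_coe_eq_pi_iff (hm1 : 0 < m1) (hm2 : 0 < m2)
    (ht : t ∈ Set.Ico 0 (2 * π)) :
    (2 * m1 * m2) • (t : Angle) = π ↔
      ∃ l : ℕ, l < 2 * m1 * m2 ∧ t = (l + 1 / 2) * π / (m1 * m2) := by
  have hN : (0 : ℝ) < m1 * m2 := by positivity
  rw [← natCast_mul_eq_nsmul, angle_eq_iff_two_pi_dvd_sub]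
  push_cast
  constructor
  · rintro ⟨k, hk⟩
    have hk0 : 0 ≤ k := by
      have : (-1 : ℝ) < k := by nlinarith [ht.1, pi_pos]
      have : (-1 : ℤ) < k := by exact_mod_cast this
      omega
    lift k to ℕ using hk0
    push_cast at hk
    refine ⟨k, ?_, ?_⟩
    · have : (k : ℝ) < 2 * m1 * m2 := by
        nlinarith [mul_lt_mul_of_pos_left ht.2 (by positivity : (0 : ℝ) < 2 * m1 * m2), pi_pos]
      exact_mod_cast this
    · field_simp
      linarith
  · rintro ⟨l, -, rfl⟩
    exact ⟨l, by push_cast; field_simp; ring⟩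

theorem sin_natCast_mul_ne_zero_of_two_mul_mul_nsmul_eq_pi (h : (2 * m1 * m2) • (t : Angle) = π) :
    Real.sin (m2 * t) ≠ 0 := by
  rw [sin_natCast_mul_eq_sin_nsmul, Ne, Angle.sin_eq_zero_iff, ← Angle.two_nsmul_eq_zero_iff]
  intro h0
  rw [mul_comm 2, mul_assoc, mul_nsmul', mul_nsmul', h0, nsmul_zero] at h
  exact Angle.pi_ne_zero h.symm

end

theorem stmt2 (m1 m2 : ℕ) (hm1 : 0 < m1) (hm2 : 0 < m2)
    (hgcd : Nat.gcd m1 m2 = 1) (hodd : Odd m2) (α t : ℝ)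
    (ht : t ∈ Set.Ico (0:ℝ) (2 * π)) :
    ((∃ l : ℕ, l < 2 * m1 * m2 ∧ m1 ∣ l ∧ t = l * π / (m1 * m2)) →
      Set.ncard {s ∈ Set.Ico (0:ℝ) (2 * π) |
        lissajous m1 m2 α s = lissajous m1 m2 α t} = m2) ∧
    ((∃ l : ℕ, l < 2 * m1 * m2 ∧ t = (l + 1/2) * π / (m1 * m2)) →
      Set.ncard {s ∈ Set.Ico (0:ℝ) (2 * π) |
        lissajous m1 m2 α s = lissajous m1 m2 α t} = 2) ∧
    ((¬ ∃ l : ℕ, l < 2 * m1 * m2 ∧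
        (t = l * π / (m1 * m2) ∧ m1 ∣ l ∨ t = (l + 1/2) * π / (m1 * m2))) →
      Set.ncard {s ∈ Set.Ico (0:ℝ) (2 * π) |
        lissajous m1 m2 α s = lissajous m1 m2 α t} = 1) := by
  have hpole := sin_natCast_mul_eq_zero_iff hm1 hm2 ht
  have hhalf := two_mul_mul_nsmul_coe_eq_pi_iff hm1 hm2 ht
  refine ⟨fun h => ncard_lissajous_fiber_of_sin_eq_zero hm2 (hpole.2 h), fun h => ?_, fun h => ?_⟩
  · have hπ := hhalf.2 h
    rw [ncard_lissajous_fiber_of_sin_ne_zero hgcd hodd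
      (sin_natCast_mul_ne_zero_of_two_mul_mul_nsmul_eq_pi hπ), if_pos hπ]
  · have hsin : Real.sin (m2 * t) ≠ 0 := fun h0 =>
      let ⟨l, hl, hdvd, htl⟩ := hpole.1 h0
      h ⟨l, hl, Or.inl ⟨htl, hdvd⟩⟩
    have hπ : (2 * m1 * m2) • (t : Angle) ≠ π := fun hπ =>
      let ⟨l, hl, htl⟩ := hhalf.1 hπ
      h ⟨l, hl, Or.inr htl⟩
    rw [ncard_lissajous_fiber_of_sin_ne_zero hgcd hodd hsin, if_neg hπ]
end

section
/- Let m1, m2 be positive integers with m2 even. The functions χ_γ for γ ∈ Γ(m) form an orthogonal basis of the m1m2-dimensional complex inner product space of functions on I(m) with inner product ⟨f,g⟩ = (1/(m1m2)) Σ_{i∈I(m)} f(i) conj(g(i)). Moreover ‖χ_γ‖² = 1 if γ1 ∈ {0, m1} and ‖χ_γ‖² = 1/2 otherwise. -/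
/-!
Write `χ_γ(i) = ½ (e(γ₁i₁) ± e(-γ₁i₁)) e(γ₂i₂)` with `e(tk) = exp(iπtk/m)`. The map
`(i₁, i₂) ↦ (-i₁, i₂ + m₂)` modulo `(2m₁, 2m₂)` fixes every `χ_γ` and, because `m₂` is even,
exchanges `I(m)` with its complement among the points of even parity in `[0, 2m₁) × [0, 2m₂)`.
So a sum over `I(m)` is half a sum over that lattice, and writing the parity condition as
`(1 + (-1)^(i₁+i₂)) / 2` turns it into geometric sums over the full rectangle, which vanish
unless the frequency is divisible by `2m`. For `γ, γ' ∈ Γ(m)` the surviving frequencies force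
`γ = γ'`; removing the edge `γ₁/m₁ + γ₂/m₂ = 1, γ₂ ≠ 0` is exactly what excludes the aliasing
`γ' = (m₁ - γ₁, γ₂ ± m₂)`. Orthogonality gives linear independence, and counting `Γ(m)` column by
column, pairing the columns `a` and `m₁ - a`, gives `|Γ(m)| = m₁m₂ = |I(m)|`; the latter is
`m₁m₂ ‖χ₀‖²`.
-/

open Real Complex

/-- The index set I(m) as a finset. -/
def indexSet (m1 m2 : ℕ) : Finset (ℕ × ℕ) :=
  (Finset.range (m1 + 1) ×ˢ Finset.range (2 * m2)).filter
    (fun i => ((i.1 = 0 ∨ i.1 = m1) → i.2 < m2) ∧ Even (i.1 + i.2))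

/-- The spectral index set Γ(m) = Γ̄(m) \ Γ^U, with the defining inequalities
γ₁/m₁ + |γ₂|/m₂ ≤ 1 and γ₁/m₁ + γ₂/m₂ = 1 written in the equivalent
denominator-cleared integer form. -/
noncomputable def GammaSet (m1 m2 : ℕ) : Finset (ℤ × ℤ) :=
  ((Finset.Icc (0 : ℤ) m1) ×ˢ (Finset.Icc (-(m2 : ℤ)) m2)).filter
    (fun γ => ((1 ≤ γ.1 ∧ (m2 : ℤ) * γ.1 + (m1 : ℤ) * |γ.2| ≤ m1 * m2) ∨
        (γ.1 = 0 ∧ Even γ.2 ∧ |γ.2| < (m2 : ℤ))) ∧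
      ¬((m2 : ℤ) * γ.1 + (m1 : ℤ) * γ.2 = m1 * m2 ∧ γ.2 ≠ 0))

/-- The discretized parity-modified Fourier basis functions χ_γ. -/
noncomputable def chi (m1 m2 : ℕ) (γ : ℤ × ℤ) (i : ℕ × ℕ) : ℂ :=
  if Even γ.2 then
    (Real.cos ((γ.1 : ℝ) * i.1 * π / m1) : ℂ) *
      Complex.exp (Complex.I * γ.2 * i.2 * (π : ℂ) / m2)
  else
    Complex.I * (Real.sin ((γ.1 : ℝ) * i.1 * π / m1) : ℂ) *
      Complex.exp (Complex.I * γ.2 * i.2 * (π : ℂ) / m2)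

/-- The discrete inner product on functions on I(m). -/
noncomputable def discInner (m1 m2 : ℕ) (f h : ℕ × ℕ → ℂ) : ℂ :=
  (1 / (m1 * m2 : ℂ)) * ∑ i ∈ indexSet m1 m2, f i * (starRingEnd ℂ) (h i)

open Finset

noncomputable def expMode (m : ℕ) (t : ℤ) (k : ℕ) : ℂ :=
  Complex.exp (Complex.I * t * k * π / m)

section expMode

variable {m : ℕ}

lemma expMode_add (m : ℕ) (t u : ℤ) (k : ℕ) :
    expMode m (t + u) k = expMode m t k * expMode m u k := by
  rw [expMode, expMode, expMode, ← Complex.exp_add]; push_cast; ring_nf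

lemma expMode_add_right (m : ℕ) (t : ℤ) (k l : ℕ) :
    expMode m t (k + l) = expMode m t k * expMode m t l := by
  rw [expMode, expMode, expMode, ← Complex.exp_add]; push_cast; ring_nf

lemma expMode_zero_right (m : ℕ) (t : ℤ) : expMode m t 0 = 1 := by simp [expMode]

lemma conj_expMode (m : ℕ) (t : ℤ) (k : ℕ) :
    (starRingEnd ℂ) (expMode m t k) = expMode m (-t) k := by
  rw [expMode, expMode, ← Complex.exp_conj]; simp

lemma expMode_self_right (hm : m ≠ 0) (t : ℤ) : expMode m t m = (-1) ^ t := by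
  have : Complex.I * t * m * π / m = t * (π * Complex.I) := by field_simp
  rw [expMode, this, Complex.exp_int_mul, Complex.exp_pi_mul_I]

lemma expMode_self (hm : m ≠ 0) (k : ℕ) : expMode m m k = (-1) ^ k := by
  have : Complex.I * (m : ℤ) * k * π / m = k * (π * Complex.I) := by push_cast; field_simp
  rw [expMode, this, Complex.exp_nat_mul, Complex.exp_pi_mul_I]

lemma expMode_two_mul_sub (hm : m ≠ 0) (t : ℤ) {k : ℕ} (hk : k ≤ 2 * m) :
    expMode m t (2 * m - k) = expMode m (-t) k := by
  have : Complex.I * t * ((2 * m - k : ℕ) : ℂ) * π / m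
      = Complex.I * (-t : ℤ) * k * π / m + t * (2 * π * Complex.I) := by
    push_cast [Nat.cast_sub hk]; field_simp; ring
  rw [expMode, expMode, this, Complex.exp_add, Complex.exp_int_mul_two_pi_mul_I, mul_one]

lemma expMode_eq_pow (m : ℕ) (t : ℤ) (k : ℕ) : expMode m t k = expMode m t 1 ^ k := by
  rw [expMode, expMode, ← Complex.exp_nat_mul]; push_cast; ring_nf

lemma expMode_one_eq_one_iff (hm : m ≠ 0) (t : ℤ) :
    expMode m t 1 = 1 ↔ (2 * m : ℤ) ∣ t := by
  have hπ : (π : ℂ) ≠ 0 := Complex.ofReal_ne_zero.2 Real.pi_ne_zero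
  rw [expMode, Complex.exp_eq_one_iff]
  refine ⟨fun ⟨n, hn⟩ => ⟨n, ?_⟩, fun ⟨n, hn⟩ => ⟨n, ?_⟩⟩
  · rw [div_eq_iff (by exact_mod_cast hm)] at hn
    have : ((t : ℤ) : ℂ) = ((2 * m * n : ℤ) : ℂ) := by
      push_cast
      apply mul_right_cancel₀ (mul_ne_zero hπ Complex.I_ne_zero)
      linear_combination hn
    exact_mod_cast this
  · subst hn; push_cast; field_simp

end expMode

noncomputable def periodicDelta (m : ℕ) (t : ℤ) : ℂ :=
  if (2 * m : ℤ) ∣ t then 2 * m else 0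

lemma sum_range_expMode {m : ℕ} (hm : m ≠ 0) (t : ℤ) :
    ∑ k ∈ range (2 * m), expMode m t k = periodicDelta m t := by
  rw [sum_congr rfl fun k _ => expMode_eq_pow m t k, periodicDelta]
  split_ifs with h
  · simp [(expMode_one_eq_one_iff hm t).2 h]
  · have hne : expMode m t 1 ≠ 1 := mt (expMode_one_eq_one_iff hm t).1 h
    have hperiod : expMode m t (2 * m) = 1 := by
      simpa [expMode_zero_right] using expMode_two_mul_sub hm t (Nat.zero_le _)
    rw [geom_sum_eq hne, ← expMode_eq_pow, hperiod, sub_self, zero_div]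

lemma periodicDelta_congr {m : ℕ} {t u : ℤ} (h : (2 * m : ℤ) ∣ t - u) :
    periodicDelta m t = periodicDelta m u := by
  have : (2 * m : ℤ) ∣ t ↔ (2 * m : ℤ) ∣ u := by
    constructor <;> intro h' <;> [simpa using dvd_sub h' h; simpa using dvd_add h h']
  simp only [periodicDelta, this]

lemma periodicDelta_neg (m : ℕ) (t : ℤ) : periodicDelta m (-t) = periodicDelta m t := by
  simp only [periodicDelta, dvd_neg]

lemma periodicDelta_eq_zero {m : ℕ} {t : ℤ} (hlo : -(2 * m : ℤ) < t) (hhi : t < 4 * m)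
    (h0 : t ≠ 0) (h2 : t ≠ 2 * m) : periodicDelta m t = 0 := by
  rw [periodicDelta, if_neg]
  rintro ⟨c, rfl⟩
  have : -1 < c := by nlinarith
  have : c < 2 := by nlinarith
  interval_cases c <;> simp_all

lemma periodicDelta_of_dvd {m : ℕ} {t : ℤ} (h : (2 * m : ℤ) ∣ t) : periodicDelta m t = 2 * m :=
  if_pos h

lemma neg_one_zpow_mul_self {α : Type*} [DivisionRing α] (n : ℤ) :
    ((-1 : α) ^ n) * (-1) ^ n = 1 := by
  rw [← zpow_add₀ (neg_ne_zero.2 one_ne_zero)]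
  exact Even.neg_one_zpow ⟨n, rfl⟩

lemma chi_eq_expMode (m1 m2 : ℕ) (γ : ℤ × ℤ) (i : ℕ × ℕ) :
    chi m1 m2 γ i =
      (expMode m1 γ.1 i.1 + (-1) ^ γ.2 * expMode m1 (-γ.1) i.1) / 2 * expMode m2 γ.2 i.2 := by
  have harg : ((γ.1 * i.1 * π / m1 : ℝ) : ℂ) * Complex.I = Complex.I * γ.1 * i.1 * π / m1 := by
    push_cast; ring
  have harg' : -((γ.1 * i.1 * π / m1 : ℝ) : ℂ) * Complex.I
      = Complex.I * (-γ.1 : ℤ) * i.1 * π / m1 := by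
    push_cast; ring
  rw [chi, expMode, expMode, expMode]
  split_ifs with h
  · rw [h.neg_one_zpow, Complex.ofReal_cos, Complex.cos, harg, harg']
    ring
  · rw [(Int.not_even_iff_odd.1 h).neg_one_zpow, Complex.ofReal_sin, Complex.sin, harg, harg']
    ring_nf
    rw [Complex.I_sq]
    ring

lemma two_mul_sum_filter_even {ι R : Type*} [CommRing R] (s : Finset ι) (n : ι → ℕ)
    (f : ι → R) :
    2 * ∑ i ∈ s with Even (n i), f i = ∑ i ∈ s, f i + ∑ i ∈ s, (-1) ^ n i * f i := by
  rw [← sum_add_distrib, ← sum_filter_add_sum_filter_not s (fun i => Even (n i))]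
  have hodd : ∑ i ∈ s with ¬Even (n i), (f i + (-1) ^ n i * f i) = 0 :=
    sum_eq_zero fun i hi => by rw [(Nat.not_even_iff_odd.1 (mem_filter.1 hi).2).neg_one_pow]; ring
  rw [hodd, add_zero, mul_sum]
  exact sum_congr rfl fun i hi => by rw [(mem_filter.1 hi).2.neg_one_pow]; ring

def evenLattice (m1 m2 : ℕ) : Finset (ℕ × ℕ) :=
  (range (2 * m1) ×ˢ range (2 * m2)).filter fun i => Even (i.1 + i.2)

/-- `(j₁, j₂) ↦ (-j₁, j₂ + m₂)` modulo `(2m₁, 2m₂)`. -/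
def negShift (m1 m2 : ℕ) (j : ℕ × ℕ) : ℕ × ℕ :=
  (if j.1 = 0 then 0 else 2 * m1 - j.1, if j.2 < m2 then j.2 + m2 else j.2 - m2)

section negShift

variable {m1 m2 : ℕ} {j : ℕ × ℕ}

lemma mem_indexSet_iff :
    j ∈ indexSet m1 m2 ↔
      j.1 ≤ m1 ∧ j.2 < 2 * m2 ∧ ((j.1 = 0 ∨ j.1 = m1) → j.2 < m2) ∧ (j.1 + j.2) % 2 = 0 := by
  simp only [indexSet, mem_filter, mem_product, mem_range, Nat.lt_succ_iff, Nat.even_iff]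
  tauto

lemma mem_evenLattice_iff :
    j ∈ evenLattice m1 m2 ↔ j.1 < 2 * m1 ∧ j.2 < 2 * m2 ∧ (j.1 + j.2) % 2 = 0 := by
  simp only [evenLattice, mem_filter, mem_product, mem_range, Nat.even_iff, and_assoc]

lemma indexSet_subset_evenLattice (hm1 : 0 < m1) : indexSet m1 m2 ⊆ evenLattice m1 m2 := by
  intro j hj
  rw [mem_indexSet_iff] at hj
  rw [mem_evenLattice_iff]
  omega

lemma negShift_mem_sdiff (hm1 : 0 < m1) (heven : Even m2) (hj : j ∈ indexSet m1 m2) :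
    negShift m1 m2 j ∈ evenLattice m1 m2 \ indexSet m1 m2 := by
  rw [mem_indexSet_iff] at hj
  obtain ⟨k, rfl⟩ := heven
  simp only [mem_sdiff, mem_evenLattice_iff, mem_indexSet_iff, negShift]
  split_ifs <;> omega

lemma negShift_mem_indexSet (heven : Even m2) (hj : j ∈ evenLattice m1 m2 \ indexSet m1 m2) :
    negShift m1 m2 j ∈ indexSet m1 m2 := by
  simp only [mem_sdiff, mem_evenLattice_iff, mem_indexSet_iff] at hj
  obtain ⟨k, rfl⟩ := heven
  simp only [mem_indexSet_iff, negShift]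
  split_ifs <;> omega

lemma negShift_negShift (hj : j ∈ evenLattice m1 m2) : negShift m1 m2 (negShift m1 m2 j) = j := by
  rw [mem_evenLattice_iff] at hj
  simp only [negShift]
  ext <;> split_ifs <;> omega

lemma sum_evenLattice_eq_two_mul {R : Type*} [Semiring R] (hm1 : 0 < m1) (heven : Even m2)
    (F : ℕ × ℕ → R)
    (hF : ∀ j ∈ evenLattice m1 m2, F (negShift m1 m2 j) = F j) :
    ∑ j ∈ evenLattice m1 m2, F j = 2 * ∑ j ∈ indexSet m1 m2, F j := by
  have hsub := indexSet_subset_evenLattice (m2 := m2) hm1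
  have hcompl : ∑ j ∈ evenLattice m1 m2 \ indexSet m1 m2, F j = ∑ j ∈ indexSet m1 m2, F j :=
    sum_nbij' (negShift m1 m2) (negShift m1 m2) (fun _ hj => negShift_mem_indexSet heven hj)
      (fun _ hj => negShift_mem_sdiff hm1 heven hj)
      (fun _ hj => negShift_negShift (mem_sdiff.1 hj).1) (fun _ hj => negShift_negShift (hsub hj))
      (fun j hj => (hF j (mem_sdiff.1 hj).1).symm)
  rw [← sum_sdiff hsub, hcompl, two_mul]

lemma chi_negShift (hm1 : 0 < m1) (hm2 : 0 < m2) (γ : ℤ × ℤ) (hj : j ∈ evenLattice m1 m2) :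
    chi m1 m2 γ (negShift m1 m2 j) = chi m1 m2 γ j := by
  rw [mem_evenLattice_iff] at hj
  have hsq := neg_one_zpow_mul_self (α := ℂ) γ.2
  have hshift : expMode m2 γ.2 (negShift m1 m2 j).2 = (-1) ^ γ.2 * expMode m2 γ.2 j.2 := by
    simp only [negShift]
    split_ifs with h
    · rw [expMode_add_right, expMode_self_right hm2.ne', mul_comm]
    · conv_rhs => rw [← Nat.sub_add_cancel (not_lt.1 h), expMode_add_right,
        expMode_self_right hm2.ne']
      linear_combination (-expMode m2 γ.2 (j.2 - m2)) * hsq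
  rw [chi_eq_expMode, chi_eq_expMode, hshift]
  simp only [negShift]
  split_ifs with h
  · rw [h, expMode_zero_right, expMode_zero_right]
    linear_combination (expMode m2 γ.2 j.2 / 2) * hsq
  · rw [expMode_two_mul_sub hm1.ne' _ (by omega), expMode_two_mul_sub hm1.ne' _ (by omega),
      neg_neg]
    linear_combination (expMode m1 γ.1 j.1 * expMode m2 γ.2 j.2 / 2) * hsq

end negShift

noncomputable def rowExp (m : ℕ) (γ γ' : ℤ × ℤ) (k : ℤ) (j : ℕ) : ℂ :=
  expMode m (γ.1 - γ'.1 + k) j + (-1) ^ γ'.2 * expMode m (γ.1 + γ'.1 + k) j +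
    (-1) ^ γ.2 * expMode m (-γ.1 - γ'.1 + k) j +
    (-1) ^ γ.2 * (-1) ^ γ'.2 * expMode m (γ'.1 - γ.1 + k) j

noncomputable def crossDelta (m : ℕ) (γ γ' : ℤ × ℤ) (k : ℤ) : ℂ :=
  (1 + (-1) ^ γ.2 * (-1) ^ γ'.2) * periodicDelta m (γ.1 - γ'.1 + k) +
    ((-1) ^ γ.2 + (-1) ^ γ'.2) * periodicDelta m (γ.1 + γ'.1 + k)

lemma four_mul_chi_mul_conj (m1 m2 : ℕ) (γ γ' : ℤ × ℤ) (i : ℕ × ℕ) :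
    4 * (chi m1 m2 γ i * (starRingEnd ℂ) (chi m1 m2 γ' i)) =
      rowExp m1 γ γ' 0 i.1 * expMode m2 (γ.2 - γ'.2) i.2 := by
  have hconj : (starRingEnd ℂ) ((-1 : ℂ) ^ γ'.2) = (-1) ^ γ'.2 := by simp
  simp only [chi_eq_expMode, rowExp, map_mul, map_div₀, map_add, hconj, conj_expMode, map_ofNat,
    neg_neg, add_zero, sub_eq_add_neg, expMode_add]
  ring

lemma neg_one_pow_mul_rowExp_mul {m1 m2 : ℕ} (hm1 : m1 ≠ 0) (hm2 : m2 ≠ 0) (γ γ' : ℤ × ℤ)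
    (k b : ℤ) (i : ℕ × ℕ) :
    (-1) ^ (i.1 + i.2) * (rowExp m1 γ γ' k i.1 * expMode m2 b i.2) =
      rowExp m1 γ γ' (k + m1) i.1 * expMode m2 (b + m2) i.2 := by
  simp only [rowExp, ← add_assoc, expMode_add _ _ (m1 : ℤ), expMode_add _ _ (m2 : ℤ),
    expMode_self hm1, expMode_self hm2]
  ring

lemma sum_range_rowExp {m : ℕ} (hm : m ≠ 0) (γ γ' : ℤ × ℤ) {k : ℤ} (hk : (m : ℤ) ∣ k) :
    ∑ j ∈ range (2 * m), rowExp m γ γ' k j = crossDelta m γ γ' k := by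
  obtain ⟨c, hc⟩ := hk
  have h1 : periodicDelta m (-γ.1 - γ'.1 + k) = periodicDelta m (γ.1 + γ'.1 + k) := by
    rw [← periodicDelta_neg]
    exact periodicDelta_congr ⟨-c, by rw [hc]; ring⟩
  have h2 : periodicDelta m (γ'.1 - γ.1 + k) = periodicDelta m (γ.1 - γ'.1 + k) := by
    rw [← periodicDelta_neg]
    exact periodicDelta_congr ⟨-c, by rw [hc]; ring⟩
  simp only [rowExp, sum_add_distrib, ← mul_sum, sum_range_expMode hm]
  rw [h1, h2, crossDelta]
  ring

lemma sum_product_mul {ι κ R : Type*} [CommSemiring R] (s : Finset ι) (t : Finset κ)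
    (f : ι → R) (g : κ → R) :
    ∑ i ∈ s ×ˢ t, f i.1 * g i.2 = (∑ i ∈ s, f i) * ∑ j ∈ t, g j := by
  rw [sum_product, sum_mul_sum]

theorem sixteen_mul_sum_chi_mul_conj {m1 m2 : ℕ} (hm1 : 0 < m1) (hm2 : 0 < m2) (heven : Even m2)
    (γ γ' : ℤ × ℤ) :
    16 * ∑ i ∈ indexSet m1 m2, chi m1 m2 γ i * (starRingEnd ℂ) (chi m1 m2 γ' i) =
      crossDelta m1 γ γ' 0 * periodicDelta m2 (γ.2 - γ'.2) +
        crossDelta m1 γ γ' m1 * periodicDelta m2 (γ.2 - γ'.2 + m2) := by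
  set F := fun i => chi m1 m2 γ i * (starRingEnd ℂ) (chi m1 m2 γ' i) with hF
  set R := range (2 * m1) ×ˢ range (2 * m2)
  have hinv : ∀ j ∈ evenLattice m1 m2, F (negShift m1 m2 j) = F j := fun j hj => by
    simp only [F, chi_negShift hm1 hm2 _ hj]
  have hsum : ∑ i ∈ R, 4 * F i = crossDelta m1 γ γ' 0 * periodicDelta m2 (γ.2 - γ'.2) := by
    simp only [hF, four_mul_chi_mul_conj, sum_product_mul, R,
      sum_range_rowExp hm1.ne' _ _ (dvd_zero _), sum_range_expMode hm2.ne']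
  have hsum' : ∑ i ∈ R, (-1) ^ (i.1 + i.2) * (4 * F i) =
      crossDelta m1 γ γ' m1 * periodicDelta m2 (γ.2 - γ'.2 + m2) := by
    simp only [hF, four_mul_chi_mul_conj, neg_one_pow_mul_rowExp_mul hm1.ne' hm2.ne', zero_add,
      sum_product_mul, R, sum_range_rowExp hm1.ne' _ _ dvd_rfl, sum_range_expMode hm2.ne']
  calc 16 * ∑ i ∈ indexSet m1 m2, F i = 2 * ∑ i ∈ evenLattice m1 m2, 4 * F i := by
        rw [← mul_sum, sum_evenLattice_eq_two_mul hm1 heven F hinv]; ring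
    _ = _ := two_mul_sum_filter_even R (fun i => i.1 + i.2) _
    _ = _ := by rw [hsum, hsum']

section GammaSet

variable {m1 m2 : ℕ}

lemma mem_GammaSet_iff (hm1 : 0 < m1) (hm2 : 0 < m2) {γ : ℤ × ℤ} :
    γ ∈ GammaSet m1 m2 ↔
      0 ≤ γ.1 ∧ |γ.2| < m2 ∧ m2 * γ.1 + m1 * |γ.2| ≤ m1 * m2 ∧ (γ.1 = 0 → Even γ.2) ∧
        (m2 * γ.1 + m1 * γ.2 = m1 * m2 → γ.2 = 0) := by
  have hm1' : (0 : ℤ) < m1 := by exact_mod_cast hm1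
  have hm2' : (0 : ℤ) < m2 := by exact_mod_cast hm2
  have habs := abs_nonneg γ.2
  simp only [GammaSet, mem_filter, mem_product, mem_Icc, not_and_not_right]
  constructor
  · rintro ⟨⟨⟨h0, -⟩, -⟩, ⟨h1, hle⟩ | ⟨h1, hev, hlt⟩, hline⟩
    · refine ⟨by omega, ?_, hle, fun h => by omega, hline⟩
      nlinarith
    · refine ⟨h0, hlt, ?_, fun _ => hev, hline⟩
      rw [h1]
      nlinarith
  · rintro ⟨h0, hlt, hle, hev, hline⟩
    refine ⟨⟨⟨h0, by nlinarith⟩, ?_⟩, ?_, hline⟩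
    · have := abs_lt.1 hlt; constructor <;> linarith
    · rcases h0.lt_or_eq with h | h
      · exact Or.inl ⟨h, hle⟩
      · exact Or.inr ⟨h.symm, hev h.symm, hlt⟩

variable (hm1 : 0 < m1) (hm2 : 0 < m2) {γ γ' : ℤ × ℤ}
include hm1 hm2

lemma fst_le_of_mem_GammaSet (hγ : γ ∈ GammaSet m1 m2) : γ.1 ≤ m1 := by
  obtain ⟨-, -, hle, -⟩ := (mem_GammaSet_iff hm1 hm2).1 hγ
  have : (m2 : ℤ) * γ.1 ≤ m2 * m1 := by nlinarith [abs_nonneg γ.2]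
  exact le_of_mul_le_mul_left this (by exact_mod_cast hm2)

lemma snd_eq_zero_of_fst_eq (hγ : γ ∈ GammaSet m1 m2) (h : γ.1 = m1) : γ.2 = 0 := by
  obtain ⟨-, -, hle, -⟩ := (mem_GammaSet_iff hm1 hm2).1 hγ
  rw [h] at hle
  have : (m1 : ℤ) * |γ.2| ≤ m1 * 0 := by linarith
  exact abs_nonpos_iff.1 (le_of_mul_le_mul_left this (by exact_mod_cast hm1))

lemma snd_ne_add_of_fst_add_eq (hγ : γ ∈ GammaSet m1 m2) (hγ' : γ' ∈ GammaSet m1 m2)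
    (h : γ.1 + γ'.1 = m1) : γ'.2 ≠ γ.2 + m2 := by
  intro h2
  obtain ⟨-, hlt, hle, -⟩ := (mem_GammaSet_iff hm1 hm2).1 hγ
  obtain ⟨-, -, hle', -, hline'⟩ := (mem_GammaSet_iff hm1 hm2).1 hγ'
  have := neg_abs_le γ.2
  have := le_abs_self γ'.2
  have hzero := hline' (by nlinarith)
  have := abs_lt.1 hlt
  omega

lemma bounds_of_mem_GammaSet (hγ : γ ∈ GammaSet m1 m2) :
    0 ≤ γ.1 ∧ γ.1 ≤ m1 ∧ -(m2 : ℤ) < γ.2 ∧ γ.2 < m2 := by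
  obtain ⟨h0, hlt, -⟩ := (mem_GammaSet_iff hm1 hm2).1 hγ
  exact ⟨h0, fst_le_of_mem_GammaSet hm1 hm2 hγ, abs_lt.1 hlt⟩

lemma crossDelta_zero_mul_periodicDelta_eq_zero (hγ : γ ∈ GammaSet m1 m2)
    (hγ' : γ' ∈ GammaSet m1 m2) (hne : γ ≠ γ') :
    crossDelta m1 γ γ' 0 * periodicDelta m2 (γ.2 - γ'.2) = 0 := by
  have := bounds_of_mem_GammaSet hm1 hm2 hγ
  have := bounds_of_mem_GammaSet hm1 hm2 hγ'
  by_cases h2 : γ.2 = γ'.2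
  · have h1 : γ.1 ≠ γ'.1 := fun h1 => hne (Prod.ext h1 h2)
    rw [crossDelta, periodicDelta_eq_zero (by omega) (by omega) (by omega) (by omega),
      periodicDelta_eq_zero (by omega) (by omega) (by omega) (by omega)]
    ring
  · rw [periodicDelta_eq_zero (by omega) (by omega) (by omega) (by omega), mul_zero]

lemma crossDelta_mul_periodicDelta_add_eq_zero (hγ : γ ∈ GammaSet m1 m2)
    (hγ' : γ' ∈ GammaSet m1 m2) :
    crossDelta m1 γ γ' m1 * periodicDelta m2 (γ.2 - γ'.2 + m2) = 0 := by
  have := bounds_of_mem_GammaSet hm1 hm2 hγ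
  have := bounds_of_mem_GammaSet hm1 hm2 hγ'
  by_cases h2 : γ'.2 = γ.2 + m2 ∨ γ.2 = γ'.2 + m2
  · have hm : ¬(γ.1 = m1 ∨ γ'.1 = m1) := by
      rintro (h | h)
      · have := snd_eq_zero_of_fst_eq hm1 hm2 hγ h; omega
      · have := snd_eq_zero_of_fst_eq hm1 hm2 hγ' h; omega
    have hsum : γ.1 + γ'.1 ≠ m1 := fun h => by
      rcases h2 with h2 | h2
      · exact snd_ne_add_of_fst_add_eq hm1 hm2 hγ hγ' h h2
      · exact snd_ne_add_of_fst_add_eq hm1 hm2 hγ' hγ (by omega) h2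
    rw [crossDelta, periodicDelta_eq_zero (by omega) (by omega) (by omega) (by omega),
      periodicDelta_eq_zero (by omega) (by omega) (by omega) (by omega)]
    ring
  · rw [periodicDelta_eq_zero (by omega) (by omega) (by omega) (by omega), mul_zero]

end GammaSet

section Orthogonality

variable {m1 m2 : ℕ} (hm1 : 0 < m1) (hm2 : 0 < m2) (heven : Even m2) {γ γ' : ℤ × ℤ}
include hm1 hm2 heven

theorem sum_chi_mul_conj_eq_zero (hγ : γ ∈ GammaSet m1 m2) (hγ' : γ' ∈ GammaSet m1 m2)
    (hne : γ ≠ γ') :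
    ∑ i ∈ indexSet m1 m2, chi m1 m2 γ i * (starRingEnd ℂ) (chi m1 m2 γ' i) = 0 := by
  have h16 := sixteen_mul_sum_chi_mul_conj hm1 hm2 heven γ γ'
  rw [crossDelta_zero_mul_periodicDelta_eq_zero hm1 hm2 hγ hγ' hne,
    crossDelta_mul_periodicDelta_add_eq_zero hm1 hm2 hγ hγ', add_zero] at h16
  exact (mul_eq_zero.1 h16).resolve_left (by norm_num)

theorem sum_chi_mul_conj_self (hγ : γ ∈ GammaSet m1 m2) :
    ∑ i ∈ indexSet m1 m2, chi m1 m2 γ i * (starRingEnd ℂ) (chi m1 m2 γ i) =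
      m1 * m2 * if γ.1 = 0 ∨ γ.1 = (m1 : ℤ) then 1 else 1 / 2 := by
  obtain ⟨-, -, -, hev, -⟩ := (mem_GammaSet_iff hm1 hm2).1 hγ
  have := bounds_of_mem_GammaSet hm1 hm2 hγ
  have h16 := sixteen_mul_sum_chi_mul_conj hm1 hm2 heven γ γ
  rw [sub_self, zero_add, periodicDelta_of_dvd (dvd_zero _),
    periodicDelta_eq_zero (t := m2) (by omega) (by omega) (by omega) (by omega), crossDelta,
    sub_self, zero_add, periodicDelta_of_dvd (dvd_zero _), neg_one_zpow_mul_self] at h16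
  split_ifs with hedge
  · have hsign : (-1 : ℂ) ^ γ.2 = 1 := by
      rcases hedge with h | h
      · exact (hev h).neg_one_zpow
      · rw [snd_eq_zero_of_fst_eq hm1 hm2 hγ h, zpow_zero]
    rw [periodicDelta_of_dvd (by rcases hedge with h | h <;> rw [h] <;> simp [← two_mul]),
      hsign] at h16
    linear_combination h16 / 16
  · rw [periodicDelta_eq_zero (by omega) (by omega) (by omega) (by omega)] at h16
    linear_combination h16 / 16

end Orthogonality

lemma card_filter_fst_eq {α β : Type*} [DecidableEq α] {s : Finset (α × β)} {a : α}
    {t : Finset β} (h : ∀ b, (a, b) ∈ s ↔ b ∈ t) : #{x ∈ s | x.1 = a} = #t := by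
  refine card_nbij' Prod.snd (Prod.mk a) ?_ ?_ ?_ ?_ <;>
    simp only [Set.MapsTo, Set.LeftInvOn, coe_filter, Set.mem_ofPred_eq, mem_coe, Prod.forall]
  · rintro a' b ⟨hab, rfl⟩
    exact (h b).1 hab
  · exact fun b hb => ⟨(h b).2 hb, trivial⟩
  · rintro a' b ⟨-, rfl⟩
    trivial
  · exact fun _ _ => trivial

lemma sum_Ioo_of_add_reflect (f : ℤ → ℤ) {n c : ℤ} (hn : 0 < n)
    (h : ∀ a ∈ Ioo 0 n, f a + f (n - a) = 2 * c) : ∑ a ∈ Ioo 0 n, f a = (n - 1) * c := by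
  have hreflect : ∑ a ∈ Ioo 0 n, f (n - a) = ∑ a ∈ Ioo 0 n, f a :=
    sum_nbij' (n - ·) (n - ·) (by intro a ha; simp only [mem_Ioo] at ha ⊢; omega)
      (by intro a ha; simp only [mem_Ioo] at ha ⊢; omega) (by intro a _; simp)
      (by intro a _; simp) (by intro a _; rfl)
  have hdouble : 2 * ∑ a ∈ Ioo 0 n, f a = 2 * ((n - 1) * c) := by
    rw [two_mul]
    nth_rewrite 2 [← hreflect]
    rw [← sum_add_distrib, sum_congr rfl h, sum_const, Int.card_Ioo,
      nsmul_eq_mul, Int.toNat_of_nonneg (by omega)]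
    ring
  omega

lemma ediv_add_mul_sub_ediv {m : ℤ} (hm : 0 < m) (C n : ℤ) :
    C / m + (m * n - C) / m = n - if m ∣ C then 0 else 1 := by
  rw [sub_eq_neg_add, Int.add_mul_ediv_left _ _ hm.ne', Int.neg_ediv, Int.sign_eq_one_of_pos hm]
  ring

lemma card_filter_Icc_mul_ne {m C : ℤ} (hm : 0 < m) (hC : 0 ≤ C) :
    (#{b ∈ Icc (-(C / m)) (C / m) | m * b ≠ C} : ℤ) =
      2 * (C / m) + 1 - if m ∣ C then 1 else 0 := by
  have hK : 0 ≤ C / m := Int.ediv_nonneg hC hm.le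
  split_ifs with hdvd
  · obtain ⟨K, rfl⟩ := hdvd
    have hne : ∀ b, m * b ≠ m * K ↔ b ≠ K := fun b => (mul_right_injective₀ hm.ne').ne_iff
    simp only [hne, filter_ne', Int.mul_ediv_cancel_left _ hm.ne'] at hK ⊢
    rw [card_erase_of_mem (by simp [hK]), Int.card_Icc]
    omega
  · rw [filter_true_of_mem (p := fun b => m * b ≠ C) fun b _ h => hdvd ⟨b, h.symm⟩,
      Int.card_Icc]
    omega

section GammaColumns

variable {m1 m2 : ℕ} (hm1 : 0 < m1) (hm2 : 0 < m2)
include hm1 hm2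

lemma card_GammaSet_column_zero (heven : Even m2) :
    #{γ ∈ GammaSet m1 m2 | γ.1 = 0} = m2 - 1 := by
  obtain ⟨k, hk⟩ := heven
  have hm1' : (0 : ℤ) < m1 := by exact_mod_cast hm1
  have hcol : ∀ b, ((0 : ℤ), b) ∈ GammaSet m1 m2 ↔ b ∈ (Ioo (-(k : ℤ)) k).image (2 * ·) := by
    intro b
    simp only [mem_GammaSet_iff hm1 hm2, mem_image, mem_Ioo, abs_lt]
    push_cast [hk]
    constructor
    · rintro ⟨-, ⟨hlo, hhi⟩, -, hev, -⟩
      obtain ⟨r, rfl⟩ := hev trivial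
      exact ⟨r, ⟨by omega, by omega⟩, by ring⟩
    · rintro ⟨c, ⟨hlo, hhi⟩, rfl⟩
      refine ⟨trivial, ⟨by omega, by omega⟩, ?_, fun _ => even_two_mul c, fun h => ?_⟩
      · nlinarith [abs_lt.2 (⟨by omega, by omega⟩ : -((k : ℤ) + k) < 2 * c ∧ 2 * c < k + k)]
      · have := mul_left_cancel₀ hm1'.ne' (by linarith : (m1 : ℤ) * (2 * c) = m1 * (k + k))
        omega
  rw [card_filter_fst_eq hcol, card_image_of_injective _ (mul_right_injective₀ two_ne_zero),
    Int.card_Ioo]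
  omega

lemma card_GammaSet_column_last : #{γ ∈ GammaSet m1 m2 | γ.1 = (m1 : ℤ)} = 1 := by
  have hcol : ∀ b, ((m1 : ℤ), b) ∈ GammaSet m1 m2 ↔ b ∈ ({0} : Finset ℤ) := by
    intro b
    rw [mem_singleton]
    refine ⟨fun h => snd_eq_zero_of_fst_eq hm1 hm2 h rfl, ?_⟩
    rintro rfl
    rw [mem_GammaSet_iff hm1 hm2]
    refine ⟨by positivity, by simpa using hm2, by simp [mul_comm], fun h => ?_, fun _ => rfl⟩
    omega
  rw [card_filter_fst_eq hcol, card_singleton]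

lemma card_GammaSet_column_interior {a : ℤ} (ha : a ∈ Ioo 0 (m1 : ℤ)) :
    (#{γ ∈ GammaSet m1 m2 | γ.1 = a} : ℤ) =
      2 * ((m1 - a) * m2 / m1) + 1 - if (m1 : ℤ) ∣ (m1 - a) * m2 then 1 else 0 := by
  rw [mem_Ioo] at ha
  have hm1' : (0 : ℤ) < m1 := by exact_mod_cast hm1
  have hm2' : (0 : ℤ) < m2 := by exact_mod_cast hm2
  set C := ((m1 : ℤ) - a) * m2 with hC
  have hCpos : 0 < C := mul_pos (by omega) hm2'
  have hCle : C < m1 * m2 := by rw [hC]; nlinarith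
  have hcol :
      ∀ b, (a, b) ∈ GammaSet m1 m2 ↔ b ∈ {b ∈ Icc (-(C / m1)) (C / m1) | m1 * b ≠ C} := by
    intro b
    have hK : |b| ≤ C / m1 ↔ m1 * |b| ≤ C := by rw [Int.le_ediv_iff_mul_le hm1', mul_comm]
    simp only [mem_GammaSet_iff hm1 hm2, mem_filter, mem_Icc, ← abs_le, hK]
    constructor
    · rintro ⟨-, -, hle, -, hline⟩
      refine ⟨by linarith, fun h => ?_⟩
      rw [hline (by linarith), mul_zero] at h
      omega
    · rintro ⟨hle, hne⟩
      refine ⟨ha.1.le, ?_, by linarith, fun h => by omega, fun h => absurd (by linarith) hne⟩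
      by_contra! hge
      nlinarith
  rw [card_filter_fst_eq hcol, card_filter_Icc_mul_ne hm1' hCpos.le]

lemma card_GammaSet_column_add_reflect {a : ℤ} (ha : a ∈ Ioo 0 (m1 : ℤ)) :
    (#{γ ∈ GammaSet m1 m2 | γ.1 = a} : ℤ) + #{γ ∈ GammaSet m1 m2 | γ.1 = (m1 : ℤ) - a} =
      2 * m2 := by
  have ha' : (m1 : ℤ) - a ∈ Ioo 0 (m1 : ℤ) := by simp only [mem_Ioo] at ha ⊢; omega
  have hm1' : (0 : ℤ) < m1 := by exact_mod_cast hm1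
  have hfloor := ediv_add_mul_sub_ediv hm1' ((m1 - a) * m2) m2
  have hdvd : (m1 : ℤ) ∣ m1 * m2 - (m1 - a) * m2 ↔ (m1 : ℤ) ∣ (m1 - a) * m2 :=
    dvd_sub_right (dvd_mul_right _ _)
  rw [card_GammaSet_column_interior hm1 hm2 ha, card_GammaSet_column_interior hm1 hm2 ha',
    show ((m1 : ℤ) - (m1 - a)) * m2 = m1 * m2 - (m1 - a) * m2 by ring]
  simp only [hdvd]
  split_ifs at hfloor ⊢ <;> omega

theorem card_GammaSet (heven : Even m2) : #(GammaSet m1 m2) = m1 * m2 := by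
  have hm1' : (0 : ℤ) < m1 := by exact_mod_cast hm1
  have hfib : #(GammaSet m1 m2) = ∑ a ∈ Icc 0 (m1 : ℤ), #{γ ∈ GammaSet m1 m2 | γ.1 = a} :=
    card_eq_sum_card_fiberwise fun γ hγ =>
      mem_Icc.2 ⟨((mem_GammaSet_iff hm1 hm2).1 hγ).1, fst_le_of_mem_GammaSet hm1 hm2 hγ⟩
  have hinterior := sum_Ioo_of_add_reflect
    (fun a : ℤ => (#{γ ∈ GammaSet m1 m2 | γ.1 = a} : ℤ)) hm1'
    fun a ha => card_GammaSet_column_add_reflect hm1 hm2 ha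
  have hcard : (#(GammaSet m1 m2) : ℤ) = m1 * m2 := by
    rw [hfib, Nat.cast_sum, ← Ioc_insert_left hm1'.le, ← Ioo_insert_right hm1',
      sum_insert (by simp [hm1'.ne]), sum_insert (by simp), hinterior,
      card_GammaSet_column_zero hm1 hm2 heven, card_GammaSet_column_last hm1 hm2,
      Nat.cast_sub (by omega)]
    push_cast
    ring
  exact_mod_cast hcard

end GammaColumns

theorem exists_eq_sum_mul_of_biorthogonal {K α β : Type*} [Field K] {S : Finset α}
    {T : Finset β} (v w : α → β → K) (hoff : ∀ a ∈ S, ∀ b ∈ S, a ≠ b → ∑ k ∈ T, v a k * w b k = 0)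
    (hdiag : ∀ a ∈ S, ∑ k ∈ T, v a k * w a k ≠ 0) (hcard : #S = #T) (f : β → K) :
    ∃ c : α → K, ∀ k ∈ T, f k = ∑ a ∈ S, c a * v a k := by
  classical
  let V : S → T → K := fun a k => v a k
  have hli : LinearIndependent K V := by
    rw [Fintype.linearIndependent_iff]
    intro g hg b
    have hpair : ∑ k : T, (∑ a, g a • V a) k * w b k = g b * ∑ k ∈ T, v b k * w b k := by
      simp only [Finset.sum_apply, Pi.smul_apply, smul_eq_mul, sum_mul, mul_assoc]
      rw [sum_comm, Fintype.sum_eq_single b fun a hab => ?_, ← mul_sum, sum_coe_sort T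
        fun k => v b k * w b k]
      rw [← mul_sum, sum_coe_sort T fun k => v a k * w b k,
        hoff a a.2 b b.2 (Subtype.coe_ne_coe.2 hab), mul_zero]
    rw [hg] at hpair
    simpa [hdiag b b.2] using hpair.symm
  have hspan := hli.span_eq_top_of_card_eq_finrank' (by simp [hcard])
  obtain ⟨c, hc⟩ := (Submodule.mem_span_range_iff_exists_fun K).1
    (hspan ▸ Submodule.mem_top : (fun k : T => f k) ∈ Submodule.span K (Set.range V))
  refine ⟨fun a => if h : a ∈ S then c ⟨a, h⟩ else 0, fun k hk => ?_⟩
  rw [← sum_coe_sort S, ← congrFun hc ⟨k, hk⟩, Finset.sum_apply]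
  exact sum_congr rfl fun a _ => by simp [V]

lemma chi_zero (m1 m2 : ℕ) (i : ℕ × ℕ) : chi m1 m2 0 i = 1 := by
  simp [chi]

lemma zero_mem_GammaSet {m1 m2 : ℕ} (hm1 : 0 < m1) (hm2 : 0 < m2) : 0 ∈ GammaSet m1 m2 :=
  (mem_GammaSet_iff hm1 hm2).2 ⟨le_rfl, by simpa using hm2, by simp; positivity,
    fun _ => Even.zero, fun _ => rfl⟩

theorem card_indexSet {m1 m2 : ℕ} (hm1 : 0 < m1) (hm2 : 0 < m2) (heven : Even m2) :
    #(indexSet m1 m2) = m1 * m2 := by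
  have h := sum_chi_mul_conj_self hm1 hm2 heven (zero_mem_GammaSet hm1 hm2)
  simp only [chi_zero, map_one, mul_one, sum_const, nsmul_eq_mul, Prod.fst_zero, true_or,
    if_true] at h
  exact_mod_cast h

theorem stmt14 (m1 m2 : ℕ) (hm1 : 0 < m1) (hm2 : 0 < m2) (heven : Even m2) :
    (indexSet m1 m2).card = m1 * m2 ∧
    (∀ γ ∈ GammaSet m1 m2, ∀ γ' ∈ GammaSet m1 m2, γ ≠ γ' →
      discInner m1 m2 (chi m1 m2 γ) (chi m1 m2 γ') = 0) ∧
    (∀ γ ∈ GammaSet m1 m2,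
      discInner m1 m2 (chi m1 m2 γ) (chi m1 m2 γ) =
        if γ.1 = 0 ∨ γ.1 = (m1 : ℤ) then 1 else 1 / 2) ∧
    (∀ f : ℕ × ℕ → ℂ, ∃ c : ℤ × ℤ → ℂ, ∀ i ∈ indexSet m1 m2,
      f i = ∑ γ ∈ GammaSet m1 m2, c γ * chi m1 m2 γ i) := by
  have hm1m2 : (m1 * m2 : ℂ) ≠ 0 :=
    mul_ne_zero (by exact_mod_cast hm1.ne') (by exact_mod_cast hm2.ne')
  refine ⟨card_indexSet hm1 hm2 heven, fun γ hγ γ' hγ' hne => ?_, fun γ hγ => ?_, ?_⟩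
  · rw [discInner, sum_chi_mul_conj_eq_zero hm1 hm2 heven hγ hγ' hne, mul_zero]
  · rw [discInner, sum_chi_mul_conj_self hm1 hm2 heven hγ, ← mul_assoc, one_div_mul_cancel hm1m2,
      one_mul]
  · refine exists_eq_sum_mul_of_biorthogonal _ (fun γ i => (starRingEnd ℂ) (chi m1 m2 γ i))
      (fun γ hγ γ' hγ' hne => sum_chi_mul_conj_eq_zero hm1 hm2 heven hγ hγ' hne)
      (fun γ hγ => ?_) (by rw [card_GammaSet hm1 hm2 heven, card_indexSet hm1 hm2 heven])
    rw [sum_chi_mul_conj_self hm1 hm2 heven hγ]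
    split_ifs <;> simp [hm1m2]
end
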